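/- Let L(x) = 2^{-3/2} e^{-x/√2} ( cos(x/√2) + sin(x/√2) ) for x ≥ 0, the equivalent kernel for smoothing splines with m = 2. Then L(|·|) is a fourth-order kernel: ∫_ℝ L(|t|) dt = 1 and ∫_ℝ t² L(|t|) dt = 0. -/

import Mathlib

/-!
With `ζ = e^{-iπ/4}` one has `L(x) = Re (ζ e^{-ζx}) / 2`, so the moments of `L` on `(0, ∞)` are
real parts of the complex Laplace integrals `∫₀^∞ xⁿ e^{-ζx} dx = n! / ζⁿ⁺¹` (integration by parts),
which gives `∫₀^∞ xⁿ L(x) dx = n! cos (nπ/4) / 2`. As `L(|·|)` is even, the two integrals over `ℝ`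
are twice the moments `n = 0` and `n = 2`, namely `1` and `2 cos (π/2) = 0`.
-/

open MeasureTheory

noncomputable section

/-- The equivalent kernel for smoothing splines with `m = 2`:
`L(x) = 2^{-3/2} e^{-x/√2} (cos(x/√2) + sin(x/√2))`. -/
def L2ker (x : ℝ) : ℝ :=
  (2 * Real.sqrt 2)⁻¹ * Real.exp (-x / Real.sqrt 2) *
    (Real.cos (x / Real.sqrt 2) + Real.sin (x / Real.sqrt 2))

open Set Filter Topology Complex
open scoped Nat Real

section LaplaceTransform

variable {b : ℂ}

lemma norm_pow_mul_cexp_neg_mul (n : ℕ) {x : ℝ} (hx : 0 ≤ x) :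
    ‖(x : ℂ) ^ n * cexp (-(b * x))‖ = x ^ n * Real.exp (-b.re * x) := by
  simp [norm_exp, abs_of_nonneg hx]

lemma integrableOn_pow_mul_cexp_neg_mul_Ioi (hb : 0 < b.re) (n : ℕ) :
    IntegrableOn (fun x : ℝ => (x : ℂ) ^ n * cexp (-(b * x))) (Ioi 0) := by
  have h := integrableOn_rpow_mul_exp_neg_mul_rpow (p := 1) (s := n)
    (by linarith [n.cast_nonneg (α := ℝ)]) one_pos hb
  refine (integrable_norm_iff (by fun_prop)).mp (h.congr_fun (fun x hx => ?_) measurableSet_Ioi)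
  rw [norm_pow_mul_cexp_neg_mul n (le_of_lt hx)]
  simp only [Real.rpow_one, Real.rpow_natCast]

lemma tendsto_pow_mul_cexp_neg_mul_atTop (hb : 0 < b.re) (n : ℕ) :
    Tendsto (fun x : ℝ => (x : ℂ) ^ n * cexp (-(b * x))) atTop (𝓝 0) := by
  rw [tendsto_zero_iff_norm_tendsto_zero]
  refine (tendsto_rpow_mul_exp_neg_mul_atTop_nhds_zero n b.re hb).congr' ?_
  filter_upwards [eventually_ge_atTop 0] with x hx
  rw [norm_pow_mul_cexp_neg_mul n hx, Real.rpow_natCast]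

lemma integral_pow_succ_mul_cexp_neg_mul_Ioi (hb : 0 < b.re) (n : ℕ) :
    ∫ x in Ioi (0 : ℝ), (x : ℂ) ^ (n + 1) * cexp (-(b * x)) =
      (n + 1) / b * ∫ x in Ioi (0 : ℝ), (x : ℂ) ^ n * cexp (-(b * x)) := by
  have hb0 : b ≠ 0 := fun h => by simp [h] at hb
  have hu (x : ℝ) : HasDerivAt (fun x : ℝ => (x : ℂ) ^ (n + 1)) ((n + 1 : ℂ) * (x : ℂ) ^ n) x := by
    simpa using (hasDerivAt_pow (n + 1) (x : ℂ)).comp_ofReal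
  have hv (x : ℝ) : HasDerivAt (fun x : ℝ => -b⁻¹ * cexp (-(b * x))) (cexp (-(b * x))) x := by
    have h : HasDerivAt (fun z : ℂ => -(b * z)) (-(b * 1)) x :=
      ((hasDerivAt_id' (x : ℂ)).const_mul b).neg
    exact (h.cexp.const_mul (-b⁻¹)).comp_ofReal.congr_deriv (by field_simp)
  have h_parts := integral_Ioi_mul_deriv_eq_deriv_mul (a := 0) (a' := 0) (b' := 0)
    (fun x _ => hu x) (fun x _ => hv x) ?_ ?_ ?_ ?_
  · rw [h_parts, sub_self, zero_sub, ← integral_neg, ← integral_const_mul]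
    exact setIntegral_congr_fun measurableSet_Ioi fun x _ => by ring
  · exact integrableOn_pow_mul_cexp_neg_mul_Ioi hb (n + 1)
  · exact IntegrableOn.congr_fun
      ((integrableOn_pow_mul_cexp_neg_mul_Ioi hb n).const_mul (-((n + 1) * b⁻¹)))
      (fun x _ => by simp only [Pi.mul_apply]; ring) measurableSet_Ioi
  · have hc : Continuous fun x : ℝ => (x : ℂ) ^ (n + 1) * (-b⁻¹ * cexp (-(b * x))) := by fun_prop
    simpa [Pi.mul_def] using hc.continuousWithinAt (s := Ioi 0) (x := 0) |>.tendsto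
  · have h := (tendsto_pow_mul_cexp_neg_mul_atTop hb (n + 1)).const_mul (-b⁻¹)
    rw [mul_zero] at h
    exact h.congr fun x => by simp only [Pi.mul_apply]; ring

theorem integral_pow_mul_cexp_neg_mul_Ioi (hb : 0 < b.re) (n : ℕ) :
    ∫ x in Ioi (0 : ℝ), (x : ℂ) ^ n * cexp (-(b * x)) = n ! / b ^ (n + 1) := by
  induction n with
  | zero =>
    have h := integral_exp_mul_complex_Ioi (a := -b) (by simpa) 0
    simp only [neg_mul, ofReal_zero, mul_zero, Complex.exp_zero] at h
    simpa [div_neg, neg_div] using h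
  | succ n ih =>
    rw [integral_pow_succ_mul_cexp_neg_mul_Ioi hb, ih, Nat.factorial_succ]
    push_cast
    field_simp
    ring

end LaplaceTransform

def L2kerRate : ℂ := cexp (↑(-(π / 4)) * I)

lemma L2kerRate_eq : L2kerRate = ↑(Real.sqrt 2 / 2) * (1 - I) := by
  rw [L2kerRate, exp_mul_I, ← ofReal_cos, ← ofReal_sin, Real.cos_neg,
    Real.sin_neg, Real.cos_pi_div_four, Real.sin_pi_div_four]
  push_cast
  ring

lemma L2kerRate_re_pos : 0 < L2kerRate.re := by
  rw [L2kerRate_eq]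
  simp

lemma L2ker_eq_re (x : ℝ) : L2ker x = (L2kerRate * cexp (-(L2kerRate * x))).re / 2 := by
  have hs : Real.sqrt 2 ^ 2 = 2 := Real.sq_sqrt zero_le_two
  have h_arg : -(L2kerRate * x) = ↑(-x / Real.sqrt 2) + ↑(x / Real.sqrt 2) * I := by
    have h0 : (Real.sqrt 2 : ℂ) ≠ 0 := by norm_cast; positivity
    have hs' : (Real.sqrt 2 : ℂ) ^ 2 = 2 := by exact_mod_cast hs
    rw [L2kerRate_eq]
    push_cast
    field_simp
    linear_combination (-(x : ℂ) * (1 - I)) * hs'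
  rw [h_arg, exp_add_mul_I, ← ofReal_exp, ← ofReal_cos, ← ofReal_sin, L2kerRate_eq, L2ker]
  simp only [mul_re, mul_im, ofReal_re, ofReal_im, sub_re, sub_im, one_re, one_im, I_re, I_im,
    add_re, add_im, neg_div]
  field_simp
  linear_combination -(Real.exp (-(x / Real.sqrt 2)) *
    (Real.cos (x / Real.sqrt 2) + Real.sin (x / Real.sqrt 2))) * hs

lemma integral_Ioi_pow_mul_L2ker (n : ℕ) :
    ∫ x in Ioi (0 : ℝ), x ^ n * L2ker x = n ! * Real.cos (n * (π / 4)) / 2 := by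
  have hζ : L2kerRate ≠ 0 := exp_ne_zero _
  have h_int := (integrableOn_pow_mul_cexp_neg_mul_Ioi L2kerRate_re_pos n).const_mul L2kerRate
  have h_inv : (L2kerRate ^ n)⁻¹ = cexp (↑(n * (π / 4)) * I) := by
    rw [L2kerRate, ← exp_nat_mul, ← exp_neg]
    push_cast
    ring_nf
  calc ∫ x in Ioi (0 : ℝ), x ^ n * L2ker x
      = ∫ x in Ioi (0 : ℝ), (L2kerRate * ((x : ℂ) ^ n * cexp (-(L2kerRate * x)))).re / 2 := by
        refine setIntegral_congr_fun measurableSet_Ioi fun x _ => ?_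
        rw [L2ker_eq_re, mul_left_comm, ← ofReal_pow, re_ofReal_mul, mul_div_assoc]
    _ = (∫ x in Ioi (0 : ℝ), L2kerRate * ((x : ℂ) ^ n * cexp (-(L2kerRate * x)))).re / 2 := by
        rw [integral_div]
        exact congrArg (· / 2) (integral_re h_int)
    _ = (n ! / L2kerRate ^ n).re / 2 := by
        rw [integral_const_mul, integral_pow_mul_cexp_neg_mul_Ioi L2kerRate_re_pos, pow_succ]
        field_simp
    _ = n ! * Real.cos (n * (π / 4)) / 2 := by
        rw [div_eq_mul_inv (n ! : ℂ), h_inv, ← ofReal_natCast, re_ofReal_mul, exp_ofReal_mul_I_re]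

/-- `L(|·|)` is a fourth-order kernel:
`∫ℝ L(|t|) dt = 1` and `∫ℝ t² L(|t|) dt = 0`. -/
theorem L2ker_fourth_order_kernel :
    (∫ t : ℝ, L2ker |t|) = 1 ∧ (∫ t : ℝ, t ^ 2 * L2ker |t|) = 0 := by
  have h_sq (t : ℝ) : t ^ 2 * L2ker |t| = |t| ^ 2 * L2ker |t| := by rw [sq_abs]
  refine ⟨?_, ?_⟩
  · rw [integral_comp_abs (f := L2ker)]
    have h := integral_Ioi_pow_mul_L2ker 0
    simp only [pow_zero, one_mul] at h
    norm_num [h]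
  · simp_rw [h_sq]
    rw [integral_comp_abs (f := fun x => x ^ 2 * L2ker x), integral_Ioi_pow_mul_L2ker 2]
    norm_num [show 2 * (π / 4) = π / 2 by ring]

end
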